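/- Let 0 ≤ b, 0 ≤ d, 0 ≤ c ≤ t with b+d ≤ U, and let λ be the Young diagram with c parts equal to b+d followed by t−c parts equal to b, contained in the t × U rectangle. Let H_1, …, H_r be its diagonal hooks, where H_m exists iff λ_m ≥ m, with arm a_m := λ_m − m + 1 and leg b_m := #{i > m : λ_i ≥ m}; associate to H_m the hook vector r_{(1+b_m, a_m)} ∈ V. Then: (i) if b ≥ c, one has the exact identity Σ_{m=1}^{r} r_{(1+b_m, a_m)} = R_{(0,0),(t, b+d)} − R_{(0,0),(t−c, b+d−c)} + R_{(0,0),(t−c, b−c)}; (ii) in general, −Σ_{m=1}^{r} r_{(1+b_m, a_m)} ≡ R_{(c−m₀, b−m₀),(t−c, d)} modulo F, where m₀ := min(b,c). -/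

import Mathlib

namespace Stmt16

/-- `V = ℤ^B`, vectors indexed by the (1-indexed) boxes of the `t × U` rectangle. -/
abbrev V : Type := ℕ × ℕ → ℤ

/-- `R_{(a,b),(c,d)} = ∑_{a < i ≤ a+c, b < j ≤ b+d} e_{(i,j)}`. -/
def R (a b c d : ℕ) : V := fun q =>
  if a < q.1 ∧ q.1 ≤ a + c ∧ b < q.2 ∧ q.2 ≤ b + d then 1 else 0

/-- The subgroup `F` generated by the frozen vectors `R_{(0,0),(c,U)}` (`1 ≤ c ≤ t`)
and `R_{(0,0),(t,d)}` (`1 ≤ d ≤ U`). -/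
def frozen (t U : ℕ) : AddSubgroup V :=
  AddSubgroup.closure
    ({v | ∃ c, 1 ≤ c ∧ c ≤ t ∧ v = R 0 0 c U} ∪ {v | ∃ d, 1 ≤ d ∧ d ≤ U ∧ v = R 0 0 t d})

/-- The hook vector `r_{(I,J)}`: the 0/1 vector whose entry at a box `(i',j')` is `1`
iff `i' ≤ I`, `j' ≤ J` and (`i' = I` or `j' = J`). -/
def hookVec (I J : ℕ) : V := fun q =>
  if 1 ≤ q.1 ∧ 1 ≤ q.2 ∧ q.1 ≤ I ∧ q.2 ≤ J ∧ (q.1 = I ∨ q.2 = J) then 1 else 0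

/-- The Young diagram with `c` parts equal to `b + d` followed by `t - c` parts equal
to `b`: its `i`-th part (`1 ≤ i ≤ t`). -/
def lam (c b d i : ℕ) : ℕ := if i ≤ c then b + d else b

/-- The leg `b_m = #{i > m : λ_i ≥ m}` of the `m`-th diagonal hook. -/
def legCount (t c b d m : ℕ) : ℕ := ((Finset.Ioc m t).filter fun i => m ≤ lam c b d i).card

/-- The sum of the hook vectors `r_{(1 + b_m, a_m)}` over the diagonal hooks `H_m`
of `λ` (the hook `H_m` exists iff `λ_m ≥ m`, with arm `a_m = λ_m - m + 1`). -/
def hookSum (t c b d : ℕ) : V :=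
  ∑ m ∈ (Finset.Icc 1 t).filter (fun m => m ≤ lam c b d m),
    hookVec (1 + legCount t c b d m) (lam c b d m - m + 1)

lemma legCount_eq (t c b d m : ℕ) (hm : 1 ≤ m) (hlam : m ≤ lam c b d m)
    (hc : c ≤ t) : legCount t c b d m = if m ≤ b then t - m else c - m := by
  unfold legCount
  by_cases hb : m ≤ b
  · rw [if_pos hb, Finset.filter_true_of_mem, Nat.card_Ioc]
    intro i _
    unfold lam; split <;> omega
  · rw [if_neg hb]
    have hbd : m ≤ b + d := by unfold lam at hlam; split at hlam <;> omega
    have hset : (Finset.Ioc m t).filter (fun i => m ≤ lam c b d i) = Finset.Ioc m c := by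
      ext i
      simp only [Finset.mem_filter, Finset.mem_Ioc]
      simp only [lam]
      split <;> omega
    rw [hset, Nat.card_Ioc]

lemma card_key (t c b d i j : ℕ) (hc : c ≤ t) :
    ((Finset.Icc 1 t).filter fun m => m ≤ lam c b d m ∧
      (1 ≤ i ∧ 1 ≤ j ∧ i ≤ 1 + (if m ≤ b then t - m else c - m) ∧
        j ≤ lam c b d m - m + 1 ∧
        (i = 1 + (if m ≤ b then t - m else c - m) ∨ j = lam c b d m - m + 1))).card
    = if (0 < i ∧ i ≤ t ∧ 0 < j ∧ j ≤ b + d) ∧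
        ¬(c - min b c < i ∧ i ≤ c - min b c + (t - c) ∧
          b - min b c < j ∧ j ≤ b - min b c + d) then 1 else 0 := by
  split_ifs with h
  · rw [Finset.card_eq_one]
    refine ⟨if c ≤ b then
        (if t < i + c ∨ b + d < j + c then min (t + 1 - i) (b + d + 1 - j)
          else min (t + 1 - i) (b + 1 - j))
      else
        (if t < i + b ∨ d < j then min (t + 1 - i) (b + d + 1 - j)
          else min (c + 1 - i) (b + d + 1 - j)), ?_⟩
    ext m
    simp only [Finset.mem_filter, Finset.mem_Icc, Finset.mem_singleton]
    simp only [lam]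
    split_ifs <;> omega
  · rw [Finset.card_eq_zero, Finset.filter_eq_empty_iff]
    intro m hm
    simp only [Finset.mem_Icc] at hm
    simp only [lam]
    split_ifs <;> omega

lemma master (t c b d : ℕ) (hc : c ≤ t) :
    hookSum t c b d = R 0 0 t (b + d) - R (c - min b c) (b - min b c) (t - c) d := by
  funext q
  obtain ⟨i, j⟩ := q
  simp only [hookSum, Finset.sum_apply, Pi.sub_apply]
  have hs : ∑ m ∈ (Finset.Icc 1 t).filter (fun m => m ≤ lam c b d m),
      hookVec (1 + legCount t c b d m) (lam c b d m - m + 1) (i, j)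
      = ∑ m ∈ (Finset.Icc 1 t).filter (fun m => m ≤ lam c b d m),
        (if (1 ≤ i ∧ 1 ≤ j ∧ i ≤ 1 + (if m ≤ b then t - m else c - m) ∧
          j ≤ lam c b d m - m + 1 ∧
          (i = 1 + (if m ≤ b then t - m else c - m) ∨ j = lam c b d m - m + 1))
          then (1 : ℤ) else 0) := by
    refine Finset.sum_congr rfl fun m hm => ?_
    simp only [Finset.mem_filter, Finset.mem_Icc] at hm
    rw [hookVec, legCount_eq t c b d m hm.1.1 hm.2 hc]
  rw [hs, Finset.sum_boole, Finset.filter_filter, card_key t c b d i j hc]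
  simp only [R]
  split_ifs <;> omega

theorem stmt16 (t U b c d : ℕ) (ht : 1 ≤ t) (hU : 1 ≤ U) (hc : c ≤ t)
    (hbd : b + d ≤ U) :
    -- (i) exact identity when `b ≥ c`
    (c ≤ b → hookSum t c b d
        = R 0 0 t (b + d) - R 0 0 (t - c) (b + d - c) + R 0 0 (t - c) (b - c)) ∧
    -- (ii) in general, `-∑ r ≡ R_{(c - m₀, b - m₀),(t - c, d)}` modulo `F`
    (-hookSum t c b d - R (c - min b c) (b - min b c) (t - c) d ∈ frozen t U) := by
  constructor
  · intro hcb
    rw [master t c b d hc]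
    funext q
    obtain ⟨i, j⟩ := q
    simp only [R, Pi.sub_apply, Pi.add_apply]
    split_ifs <;> omega
  · rw [master t c b d hc]
    have key : -(R 0 0 t (b + d) - R (c - min b c) (b - min b c) (t - c) d) -
        R (c - min b c) (b - min b c) (t - c) d = -(R 0 0 t (b + d)) := by ring
    rw [key]
    by_cases hbd0 : b + d = 0
    · have hz : R 0 0 t (b + d) = 0 := by
        funext q
        simp only [R, hbd0]
        split_ifs with h
        · omega
        · rfl
      rw [hz, neg_zero]
      exact zero_mem _
    · exact neg_mem (AddSubgroup.subset_closure
        (Or.inr ⟨b + d, by omega, hbd, rfl⟩))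

end Stmt16
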